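/- For all real numbers a, b, d with 0 < a ≤ b and 0 < d, there exists a constant L ≥ 1 (depending only on a, b, d) such that for all points p, q, r in ℍ with pairwise distances in [a, b] and all three altitudes at least d (i.e. Metric.infDist p (L(q,r)) ≥ d, Metric.infDist q (L(p,r)) ≥ d, Metric.infDist r (L(p,q)) ≥ d), there exists a map f from the standard 2-simplex Δ := {x ∈ ℝ × ℝ : 0 ≤ x.1 ∧ 0 ≤ x.2 ∧ x.1 + x.2 ≤ 1} into ℍ with f(0,0) = p, f(1,0) = q, f(0,1) = r, satisfying (1/L)·dist x y ≤ dist (f x) (f y) ≤ L·dist x y for all x, y ∈ Δ. (This is the two-dimensional case of the paper's Lemma 1: for each n ≥ 2, b > a > 0, d > 0 there is a constant L = L(n,a,b,d) such that every (a,b,d)-good geodesic simplex — one with edge lengths in [a,b] and every vertex at distance at least d from the hyperplane through the remaining vertices — is L-bilipschitz diffeomorphic to the standard Euclidean n-simplex.) -/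

import Mathlib

/-!
Move `p` to `I` and `q` onto the imaginary axis by an element of `SL(2, ℝ)`. Then the side `pq` is
vertical, and the altitude from `r` gives `|Re r| ≥ 2 Im r sinh (d / 2)`. The required map is the
Euclidean affine map of the simplex onto the triangle `p q r` of the upper half-plane model. All
vertices lie within `b` of `I`, so the triangle stays in the strip `e^{-b} ≤ Im ≤ e^b`, where the
hyperbolic and Euclidean distances are comparable; and the affine map is Euclidean-bilipschitz
because its edge vectors have length at most `e^b` while their determinant is at least
`(1 - e^{-d}) · 2 e^{-b} sinh (d / 2)`.
-/

open scoped UpperHalfPlane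

/-- The geodesic line through `q` and `r` in the hyperbolic plane: the set of points
metrically collinear with `q` and `r`. -/
def geodLine (q r : ℍ) : Set ℍ :=
  {x | dist q x + dist x r = dist q r ∨ dist q r + dist r x = dist q x ∨
       dist x q + dist q r = dist x r}

/-- The standard 2-simplex in `ℝ × ℝ`. -/
def stdSimplex2 : Set (ℝ × ℝ) := {x | 0 ≤ x.1 ∧ 0 ≤ x.2 ∧ x.1 + x.2 ≤ 1}

/-- The standard Euclidean distance on `ℝ × ℝ`. -/
noncomputable def eucDist (x y : ℝ × ℝ) : ℝ :=
  Real.sqrt ((x.1 - y.1) ^ 2 + (x.2 - y.2) ^ 2)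

open UpperHalfPlane Real Metric Matrix MatrixGroups
open scoped Pointwise

namespace UpperHalfPlane

lemma coe_toSL2R_smul (w z : ℍ) : ((toSL2R w • z : ℍ) : ℂ) = w.im * z + w.re := by
  have hw : (√w.im : ℂ) ≠ 0 := by simpa [Real.sqrt_ne_zero'] using w.im_pos
  have hsq : (√w.im : ℂ) * √w.im = w.im := by exact_mod_cast Real.mul_self_sqrt w.im_pos.le
  simp only [coe_specialLinearGroup_apply, Algebra.algebraMap_self, Fin.isValue, coe_toSL2R,
    one_div, of_apply, cons_val', cons_val_zero, cons_val_fin_one, ringHom_apply, cons_val_one,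
    map_div₀, Complex.ofReal_div, Complex.ofReal_zero, zero_mul, map_inv₀, Complex.ofReal_inv,
    zero_add, div_inv_eq_mul, fieldEq, add_left_inj]
  linear_combination (z : ℂ) * hsq

lemma re_toSL2R_smul (w z : ℍ) : (toSL2R w • z).re = w.im * z.re + w.re := by
  simpa using congrArg Complex.re (coe_toSL2R_smul w z)

def inversionAt (u : ℝ) : SL(2, ℝ) := ⟨!![0, -1; 1, -u], by simp⟩

lemma coe_inversionAt_smul (u : ℝ) (z : ℍ) : ((inversionAt u • z : ℍ) : ℂ) = -((z : ℂ) - u)⁻¹ := by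
  rw [coe_specialLinearGroup_apply]
  simp [inversionAt, neg_div, sub_eq_add_neg]

lemma re_inversionAt_smul_of_normSq_eq {z : ℍ} {c ρ : ℝ} (hρ : 0 < ρ)
    (hz : Complex.normSq ((z : ℂ) - c) = ρ ^ 2) :
    (inversionAt (c - ρ) • z).re = -1 / (2 * ρ) := by
  rw [← coe_re, coe_inversionAt_smul]
  have hns : Complex.normSq ((z : ℂ) - (c - ρ : ℝ)) = 2 * ρ * (z.re - (c - ρ)) := by
    simp only [Complex.normSq_apply, Complex.sub_re, coe_re, Complex.ofReal_re, Complex.sub_im,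
      coe_im, Complex.ofReal_im, sub_zero, Complex.ofReal_sub] at hz ⊢
    linarith
  have hpos : 0 < z.re - (c - ρ) := by
    have := Complex.normSq_pos.2 (sub_ne_zero.2 (z.ne_ofReal (c - ρ)))
    rw [hns] at this
    exact pos_of_mul_pos_right this (by positivity)
  rw [Complex.neg_re, Complex.inv_re, hns]
  simp only [Complex.ofReal_sub, Complex.sub_re, coe_re, Complex.ofReal_re]
  field_simp

lemma exists_smul_re_eq (p q : ℍ) : ∃ g : SL(2, ℝ), (g • p).re = (g • q).re := by
  rcases eq_or_ne p.re q.re with h | h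
  · exact ⟨1, by simpa using h⟩
  set c := (p.re ^ 2 + p.im ^ 2 - q.re ^ 2 - q.im ^ 2) / (2 * (p.re - q.re))
  have hc : Complex.normSq ((p : ℂ) - c) = Complex.normSq ((q : ℂ) - c) := by
    have := sub_ne_zero.2 h
    simp only [Complex.normSq_apply, Complex.sub_re, Complex.sub_im, Complex.ofReal_re,
      Complex.ofReal_im, coe_re, coe_im, sub_zero, c]
    field_simp
    ring
  -- `c - ρ` is an endpoint of the geodesic through `p` and `q`, a circle centred at `c`;
  -- inverting there turns this circle into a vertical line.
  set ρ := √(Complex.normSq ((p : ℂ) - c))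
  have hρ : 0 < ρ := Real.sqrt_pos.2 (Complex.normSq_pos.2 (sub_ne_zero.2 (p.ne_ofReal c)))
  have hp : Complex.normSq ((p : ℂ) - c) = ρ ^ 2 := (Real.sq_sqrt (Complex.normSq_nonneg _)).symm
  exact ⟨inversionAt (c - ρ), by rw [re_inversionAt_smul_of_normSq_eq hρ hp,
    re_inversionAt_smul_of_normSq_eq hρ (hc ▸ hp)]⟩

lemma exists_smul_eq_I_and_re_smul_eq_zero (p q : ℍ) :
    ∃ g : SL(2, ℝ), g • p = I ∧ (g • q).re = 0 := by
  obtain ⟨g, hg⟩ := exists_smul_re_eq p q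
  refine ⟨(toSL2R (g • p))⁻¹ * g, by rw [mul_smul, inv_smul_eq_iff, toSL2R_smul_I], ?_⟩
  have h := re_toSL2R_smul (g • p) ((toSL2R (g • p))⁻¹ • g • q)
  rw [smul_inv_smul, ← hg, right_eq_add, mul_eq_zero] at h
  rw [mul_smul]
  exact h.resolve_left (g • p).im_ne_zero

lemma dist_le_dist_coe_div_of_le_im {z w : ℍ} {m : ℝ} (hm : 0 < m) (hz : m ≤ z.im)
    (hw : m ≤ w.im) : dist z w ≤ dist (z : ℂ) w / m := by
  refine (dist_le_dist_coe_div_sqrt z w).trans (div_le_div_of_nonneg_left dist_nonneg hm ?_)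
  exact Real.le_sqrt_of_sq_le (by nlinarith)

lemma dist_coe_le_im_mul_exp_dist_mul_dist (z w : ℍ) :
    dist (z : ℂ) w ≤ w.im * exp (dist z w) * dist z w := by
  refine (dist_coe_le z w).trans ?_
  rw [mul_assoc]
  gcongr
  have h := mul_le_mul_of_nonneg_right (add_one_le_exp (-dist z w)) (exp_pos (dist z w)).le
  rw [← exp_add, neg_add_cancel, exp_zero] at h
  linarith

lemma im_mem_Icc_of_dist_I_le {z : ℍ} {b : ℝ} (h : dist I z ≤ b) :
    z.im ∈ Set.Icc (exp (-b)) (exp b) := by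
  constructor
  · have := im_div_exp_dist_le I z
    rw [I_im, one_div, ← exp_neg] at this
    exact (exp_le_exp.2 (neg_le_neg h)).trans this
  · have := im_le_im_mul_exp_dist z I
    rw [I_im, one_mul, dist_comm] at this
    exact this.trans (exp_le_exp.2 h)

lemma norm_coe_sub_I_le_exp {z : ℍ} {b : ℝ} (h : dist I z ≤ b) : ‖(z : ℂ) - I‖ ≤ exp b := by
  have := dist_coe_le z I
  rw [I_im, one_mul, dist_comm z] at this
  rw [← dist_eq_norm]
  linarith [exp_le_exp.2 h]

lemma one_sub_exp_neg_le_norm_coe_sub_I {z : ℍ} {d : ℝ} (h : d ≤ dist I z) :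
    1 - exp (-d) ≤ ‖(z : ℂ) - I‖ := by
  have := le_dist_coe z I
  rw [I_im, one_mul, dist_comm z] at this
  rw [← dist_eq_norm]
  linarith [exp_le_exp.2 (neg_le_neg h)]

end UpperHalfPlane

lemma left_mem_geodLine (p q : ℍ) : p ∈ geodLine p q := by
  simp [geodLine]

lemma geodLine_smul {G : Type*} [Group G] [MulAction G ℍ] [IsIsometricSMul G ℍ] (g : G)
    (p q : ℍ) : geodLine (g • p) (g • q) = g • geodLine p q := by
  ext x
  obtain ⟨y, rfl⟩ : ∃ y, x = g • y := ⟨g⁻¹ • x, (smul_inv_smul g x).symm⟩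
  simp [geodLine, Set.smul_mem_smul_set_iff, dist_smul]

lemma infDist_smul_geodLine {G : Type*} [Group G] [MulAction G ℍ] [IsIsometricSMul G ℍ] (g : G)
    (p q r : ℍ) : infDist (g • r) (geodLine (g • p) (g • q)) = infDist r (geodLine p q) := by
  rw [geodLine_smul, ← Set.image_smul, infDist_image (isometry_smul ℍ g)]

lemma mem_geodLine_of_re_eq {p q x : ℍ} (hq : q.re = p.re) (hx : x.re = p.re) :
    x ∈ geodLine p q := by
  simp only [geodLine, Set.mem_ofPred_eq, dist_of_re_eq, hq, hx, Real.dist_eq]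
  grind

lemma two_mul_im_mul_sinh_le_abs_re_sub {p q r : ℍ} {d : ℝ} (hq : q.re = p.re)
    (hd : d ≤ infDist r (geodLine p q)) : 2 * r.im * sinh (d / 2) ≤ |r.re - p.re| := by
  set x : ℍ := ⟨⟨p.re, r.im⟩, r.im_pos⟩
  have hx : x ∈ geodLine p q := mem_geodLine_of_re_eq hq rfl
  have hsinh := sinh_half_dist r x
  have hcoe : dist (r : ℂ) x = |r.re - p.re| := by
    rw [Complex.dist_of_im_eq (show (r : ℂ).im = (x : ℂ).im from rfl), Real.dist_eq]
    rfl
  rw [hcoe, show x.im = r.im from rfl, Real.sqrt_mul_self r.im_pos.le] at hsinh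
  have := sinh_le_sinh.2
    (div_le_div_of_nonneg_right (hd.trans (infDist_le_dist_of_mem hx)) two_pos.le)
  rw [hsinh, le_div_iff₀ (by positivity [r.im_pos])] at this
  linarith

lemma abs_mul_abs_cross_le_norm_mul_norm (v w : ℂ) (s t : ℝ) :
    |s| * |v.re * w.im - v.im * w.re| ≤ ‖(s : ℂ) * v + t * w‖ * ‖w‖ := by
  have key : (starRingEnd ℂ ((s : ℂ) * v + t * w) * w).im = s * (v.re * w.im - v.im * w.re) := by
    simp only [map_add, map_mul, Complex.conj_ofReal, Complex.mul_im, Complex.add_im,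
      Complex.add_re, Complex.mul_re, Complex.conj_re, Complex.conj_im, Complex.ofReal_re,
      Complex.ofReal_im]
    ring
  rw [← abs_mul, ← key, ← Complex.norm_conj ((s : ℂ) * v + t * w), ← norm_mul]
  exact Complex.abs_im_le_norm _

lemma norm_fst_mul_add_snd_mul_le {v w : ℂ} {K : ℝ} (hv : ‖v‖ ≤ K) (hw : ‖w‖ ≤ K)
    (x : ℝ × ℝ) : ‖(x.1 : ℂ) * v + x.2 * w‖ ≤ 2 * K * ‖x‖ := by
  have h₁ : ‖x.1‖ ≤ ‖x‖ := le_max_left _ _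
  have h₂ : ‖x.2‖ ≤ ‖x‖ := le_max_right _ _
  calc ‖(x.1 : ℂ) * v + x.2 * w‖ ≤ ‖x.1‖ * ‖v‖ + ‖x.2‖ * ‖w‖ := by
        simpa using norm_add_le ((x.1 : ℂ) * v) (x.2 * w)
    _ ≤ ‖x‖ * K + ‖x‖ * K := by gcongr
    _ = 2 * K * ‖x‖ := by ring

lemma mul_norm_le_norm_fst_mul_add_snd_mul {v w : ℂ} {K δ : ℝ} (hv : ‖v‖ ≤ K) (hw : ‖w‖ ≤ K)
    (hδ : δ ≤ |v.re * w.im - v.im * w.re|) (x : ℝ × ℝ) :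
    δ * ‖x‖ ≤ K * ‖(x.1 : ℂ) * v + x.2 * w‖ := by
  have h₁ := abs_mul_abs_cross_le_norm_mul_norm v w x.1 x.2
  have h₂ := abs_mul_abs_cross_le_norm_mul_norm w v x.2 x.1
  rw [add_comm, show w.re * v.im - w.im * v.re = -(v.re * w.im - v.im * w.re) by ring,
    abs_neg] at h₂
  refine (mul_le_mul_of_nonneg_right hδ (norm_nonneg x)).trans ?_
  rw [Prod.norm_def, mul_comm, max_mul_of_nonneg _ _ (abs_nonneg _)]
  have hz := norm_nonneg ((x.1 : ℂ) * v + x.2 * w)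
  refine max_le ?_ ?_ <;> simp only [Real.norm_eq_abs] <;> nlinarith

lemma dist_le_eucDist (x y : ℝ × ℝ) : dist x y ≤ eucDist x y := by
  rw [Prod.dist_eq, Real.dist_eq, Real.dist_eq, eucDist]
  exact max_le (Real.abs_le_sqrt (by nlinarith)) (Real.abs_le_sqrt (by nlinarith))

lemma eucDist_le_two_mul_dist (x y : ℝ × ℝ) : eucDist x y ≤ 2 * dist x y := by
  rw [Prod.dist_eq, Real.dist_eq, Real.dist_eq, eucDist, Real.sqrt_le_left (by positivity)]
  have h₁ := le_max_left |x.1 - y.1| |x.2 - y.2|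
  have h₂ := le_max_right |x.1 - y.1| |x.2 - y.2|
  nlinarith [sq_abs (x.1 - y.1), sq_abs (x.2 - y.2), abs_nonneg (x.1 - y.1), abs_nonneg (x.2 - y.2)]

lemma dist_le_one_of_mem_stdSimplex2 {x y : ℝ × ℝ} (hx : x ∈ stdSimplex2) (hy : y ∈ stdSimplex2) :
    dist x y ≤ 1 := by
  obtain ⟨hx₁, hx₂, hx⟩ := hx
  obtain ⟨hy₁, hy₂, hy⟩ := hy
  rw [Prod.dist_eq, Real.dist_eq, Real.dist_eq]
  exact max_le (abs_sub_le_iff.2 ⟨by linarith, by linarith⟩)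
    (abs_sub_le_iff.2 ⟨by linarith, by linarith⟩)

noncomputable def triangleAffine (p q r : ℂ) (x : ℝ × ℝ) : ℂ := p + x.1 * (q - p) + x.2 * (r - p)

lemma triangleAffine_sub (p q r : ℂ) (x y : ℝ × ℝ) :
    triangleAffine p q r x - triangleAffine p q r y =
      ((x - y).1 : ℂ) * (q - p) + (x - y).2 * (r - p) := by
  simp only [triangleAffine, Prod.fst_sub, Prod.snd_sub, Complex.ofReal_sub]
  ring

lemma im_triangleAffine_mem_Icc {p q r : ℂ} {m M : ℝ} (hp : p.im ∈ Set.Icc m M)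
    (hq : q.im ∈ Set.Icc m M) (hr : r.im ∈ Set.Icc m M) {x : ℝ × ℝ} (hx : x ∈ stdSimplex2) :
    (triangleAffine p q r x).im ∈ Set.Icc m M := by
  obtain ⟨hx₁, hx₂, hx⟩ := hx
  have him : (triangleAffine p q r x).im = (1 - x.1 - x.2) * p.im + x.1 * q.im + x.2 * r.im := by
    simp only [triangleAffine, Complex.add_im, Complex.mul_im, Complex.ofReal_re, Complex.sub_im,
      Complex.ofReal_im, Complex.sub_re, zero_mul, add_zero]
    ring
  rw [him]
  constructor <;> nlinarith [hp.1, hp.2, hq.1, hq.2, hr.1, hr.2]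

lemma norm_triangleAffine_sub_le {p q r : ℂ} {K : ℝ} (hq : ‖q - p‖ ≤ K) (hr : ‖r - p‖ ≤ K)
    (x y : ℝ × ℝ) : ‖triangleAffine p q r x - triangleAffine p q r y‖ ≤ 2 * K * dist x y := by
  rw [triangleAffine_sub, dist_eq_norm]
  exact norm_fst_mul_add_snd_mul_le hq hr (x - y)

lemma mul_dist_le_norm_triangleAffine_sub {p q r : ℂ} {K δ : ℝ} (hq : ‖q - p‖ ≤ K)
    (hr : ‖r - p‖ ≤ K) (hδ : δ ≤ |(q - p).re * (r - p).im - (q - p).im * (r - p).re|)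
    (x y : ℝ × ℝ) : δ * dist x y ≤ K * ‖triangleAffine p q r x - triangleAffine p q r y‖ := by
  rw [triangleAffine_sub, dist_eq_norm]
  exact mul_norm_le_norm_fst_mul_add_snd_mul hq hr hδ (x - y)

noncomputable def triangleMap (p q r : ℍ) (x : ℝ × ℝ) : ℍ := ofComplex (triangleAffine p q r x)

@[simp] lemma triangleMap_zero_zero (p q r : ℍ) : triangleMap p q r (0, 0) = p := by
  simp [triangleMap, triangleAffine]

@[simp] lemma triangleMap_one_zero (p q r : ℍ) : triangleMap p q r (1, 0) = q := by
  simp [triangleMap, triangleAffine]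

@[simp] lemma triangleMap_zero_one (p q r : ℍ) : triangleMap p q r (0, 1) = r := by
  simp [triangleMap, triangleAffine]

lemma coe_triangleMap_of_mem {p q r : ℍ} {m M : ℝ} (hm : 0 < m) (hp : p.im ∈ Set.Icc m M)
    (hq : q.im ∈ Set.Icc m M) (hr : r.im ∈ Set.Icc m M) {x : ℝ × ℝ} (hx : x ∈ stdSimplex2) :
    (triangleMap p q r x : ℂ) = triangleAffine p q r x ∧
      (triangleMap p q r x).im ∈ Set.Icc m M := by
  have him := im_triangleAffine_mem_Icc hp hq hr hx
  rw [triangleMap, ofComplex_apply_of_im_pos (hm.trans_le him.1)]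
  exact ⟨rfl, him⟩

section TriangleMap

variable {p q r : ℍ} {m M K : ℝ}

lemma dist_triangleMap_le_mul_dist (hm : 0 < m) (hp : p.im ∈ Set.Icc m M)
    (hq : q.im ∈ Set.Icc m M) (hr : r.im ∈ Set.Icc m M) (hqp : ‖(q - p : ℂ)‖ ≤ K)
    (hrp : ‖(r - p : ℂ)‖ ≤ K) {x y : ℝ × ℝ} (hx : x ∈ stdSimplex2) (hy : y ∈ stdSimplex2) :
    dist (triangleMap p q r x) (triangleMap p q r y) ≤ 2 * K / m * dist x y := by
  obtain ⟨hxc, hxi⟩ := coe_triangleMap_of_mem hm hp hq hr hx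
  obtain ⟨hyc, hyi⟩ := coe_triangleMap_of_mem hm hp hq hr hy
  calc dist (triangleMap p q r x) (triangleMap p q r y)
      ≤ dist (triangleMap p q r x : ℂ) (triangleMap p q r y) / m :=
        dist_le_dist_coe_div_of_le_im hm hxi.1 hyi.1
    _ ≤ 2 * K * dist x y / m := by
        rw [hxc, hyc, dist_eq_norm]
        gcongr
        exact norm_triangleAffine_sub_le hqp hrp x y
    _ = 2 * K / m * dist x y := by ring

lemma dist_le_mul_dist_triangleMap {δ : ℝ} (hm : 0 < m) (hδ : 0 < δ) (hp : p.im ∈ Set.Icc m M)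
    (hq : q.im ∈ Set.Icc m M) (hr : r.im ∈ Set.Icc m M) (hqp : ‖(q - p : ℂ)‖ ≤ K)
    (hrp : ‖(r - p : ℂ)‖ ≤ K)
    (hcross : δ ≤ |(q - p : ℂ).re * (r - p : ℂ).im - (q - p : ℂ).im * (r - p : ℂ).re|)
    {x y : ℝ × ℝ} (hx : x ∈ stdSimplex2) (hy : y ∈ stdSimplex2) :
    dist x y ≤ K * M * exp (2 * K / m) / δ * dist (triangleMap p q r x) (triangleMap p q r y) := by
  obtain ⟨hxc, hxi⟩ := coe_triangleMap_of_mem hm hp hq hr hx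
  obtain ⟨hyc, hyi⟩ := coe_triangleMap_of_mem hm hp hq hr hy
  have hK : 0 ≤ K := (norm_nonneg _).trans hqp
  have hcoe := dist_coe_le_im_mul_exp_dist_mul_dist (triangleMap p q r x) (triangleMap p q r y)
  rw [hxc, hyc, dist_eq_norm] at hcoe
  set D := dist (triangleMap p q r x) (triangleMap p q r y)
  have hD : D ≤ 2 * K / m :=
    (dist_triangleMap_le_mul_dist hm hp hq hr hqp hrp hx hy).trans
      (mul_le_of_le_one_right (by positivity) (dist_le_one_of_mem_stdSimplex2 hx hy))
  have hnorm : ‖triangleAffine p q r x - triangleAffine p q r y‖ ≤ M * exp (2 * K / m) * D :=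
    hcoe.trans (by gcongr; exacts [hm.le.trans (hyi.1.trans hyi.2), hyi.2])
  rw [div_mul_eq_mul_div, le_div_iff₀ hδ]
  nlinarith [mul_dist_le_norm_triangleAffine_sub hqp hrp hcross x y]

noncomputable def triangleBilipConst (m M K δ : ℝ) : ℝ :=
  max (2 * K / m) (2 * K * M * exp (2 * K / m) / δ)

lemma triangleMap_bilipschitz {δ : ℝ} (hm : 0 < m) (hδ : 0 < δ)
    (hp : p.im ∈ Set.Icc m M) (hq : q.im ∈ Set.Icc m M) (hr : r.im ∈ Set.Icc m M)
    (hqp : ‖(q - p : ℂ)‖ ≤ K) (hrp : ‖(r - p : ℂ)‖ ≤ K)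
    (hcross : δ ≤ |(q - p : ℂ).re * (r - p : ℂ).im - (q - p : ℂ).im * (r - p : ℂ).re|)
    {x y : ℝ × ℝ} (hx : x ∈ stdSimplex2) (hy : y ∈ stdSimplex2) :
    eucDist x y ≤ triangleBilipConst m M K δ * dist (triangleMap p q r x) (triangleMap p q r y) ∧
      dist (triangleMap p q r x) (triangleMap p q r y) ≤
        triangleBilipConst m M K δ * eucDist x y := by
  constructor
  · calc eucDist x y ≤ 2 * dist x y := eucDist_le_two_mul_dist x y
      _ ≤ 2 * (K * M * exp (2 * K / m) / δ * dist (triangleMap p q r x) (triangleMap p q r y)) := by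
          gcongr
          exact dist_le_mul_dist_triangleMap hm hδ hp hq hr hqp hrp hcross hx hy
      _ ≤ _ := by
          rw [← mul_assoc]
          gcongr
          exact (le_of_eq (by ring)).trans (le_max_right _ _)
  · calc _ ≤ 2 * K / m * dist x y := dist_triangleMap_le_mul_dist hm hp hq hr hqp hrp hx hy
      _ ≤ _ := by
          have hK : 0 ≤ K := (norm_nonneg _).trans hqp
          exact mul_le_mul (le_max_left _ _) (dist_le_eucDist x y) dist_nonneg
            ((by positivity : 0 ≤ 2 * K / m).trans (le_max_left _ _))

end TriangleMap

lemma abs_cross_coe_sub_I_of_re_eq_zero {q : ℍ} (hq : q.re = 0) (r : ℍ) :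
    |((q : ℂ) - I).re * ((r : ℂ) - I).im - ((q : ℂ) - I).im * ((r : ℂ) - I).re| =
      ‖(q : ℂ) - I‖ * |r.re| := by
  have hqI : (q : ℂ) - I = ((q.im - 1 : ℝ) : ℂ) * Complex.I := by
    apply Complex.ext <;> simp [hq]
  rw [hqI, norm_mul, Complex.norm_I, mul_one, Complex.norm_real, Real.norm_eq_abs]
  simp [abs_mul]

noncomputable def goodTriangleConst (b d : ℝ) : ℝ :=
  triangleBilipConst (exp (-b)) (exp b) (exp b) ((1 - exp (-d)) * (2 * exp (-b) * sinh (d / 2)))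

lemma triangleMap_I_bilipschitz {b d : ℝ} (hd : 0 < d) {q r : ℍ} (hq : q.re = 0)
    (hdq : d ≤ dist I q) (hbq : dist I q ≤ b) (hbr : dist I r ≤ b)
    (halt : d ≤ infDist r (geodLine I q)) {x y : ℝ × ℝ} (hx : x ∈ stdSimplex2)
    (hy : y ∈ stdSimplex2) :
    eucDist x y ≤ goodTriangleConst b d * dist (triangleMap I q r x) (triangleMap I q r y) ∧
      dist (triangleMap I q r x) (triangleMap I q r y) ≤ goodTriangleConst b d * eucDist x y := by
  have hsinh : 0 < sinh (d / 2) := sinh_pos_iff.2 (half_pos hd)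
  have hexp : exp (-d) < 1 := exp_lt_one_iff.2 (neg_neg_of_pos hd)
  have hrim := im_mem_Icc_of_dist_I_le hbr
  have hre : 2 * exp (-b) * sinh (d / 2) ≤ |r.re| := by
    have := two_mul_im_mul_sinh_le_abs_re_sub (hq.trans I_re.symm) halt
    rw [I_re, sub_zero] at this
    exact this.trans' (by gcongr; exact hrim.1)
  refine triangleMap_bilipschitz (exp_pos _) (mul_pos (sub_pos.2 hexp) (by positivity))
    (im_mem_Icc_of_dist_I_le ((dist_self I).trans_le (dist_nonneg.trans hbq)))
    (im_mem_Icc_of_dist_I_le hbq) hrim (norm_coe_sub_I_le_exp hbq) (norm_coe_sub_I_le_exp hbr)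
    ?_ hx hy
  rw [abs_cross_coe_sub_I_of_re_eq_zero hq]
  exact mul_le_mul (one_sub_exp_neg_le_norm_coe_sub_I hdq) hre (by positivity) (norm_nonneg _)

theorem good_triangle_bilipschitz_to_standard_simplex_general (a b d : ℝ) (hd : 0 < d) :
    ∃ L : ℝ, 1 ≤ L ∧ ∀ p q r : ℍ,
      dist p q ∈ Set.Icc a b → dist q r ∈ Set.Icc a b → dist p r ∈ Set.Icc a b →
      d ≤ Metric.infDist p (geodLine q r) →
      d ≤ Metric.infDist q (geodLine p r) →
      d ≤ Metric.infDist r (geodLine p q) →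
      ∃ f : ℝ × ℝ → ℍ,
        f (0, 0) = p ∧ f (1, 0) = q ∧ f (0, 1) = r ∧
        ∀ x ∈ stdSimplex2, ∀ y ∈ stdSimplex2,
          (1 / L) * eucDist x y ≤ dist (f x) (f y) ∧
          dist (f x) (f y) ≤ L * eucDist x y := by
  refine ⟨max 1 (goodTriangleConst b d), le_max_left _ _, fun p q r hpq _ hpr _ hq hr => ?_⟩
  obtain ⟨g, hgp, hgq⟩ := exists_smul_eq_I_and_re_smul_eq_zero p q
  have hdist (z : ℍ) : dist I (g • z) = dist p z := by rw [← hgp, dist_smul]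
  have hdq : d ≤ dist p q :=
    dist_comm p q ▸ hq.trans (infDist_le_dist_of_mem (left_mem_geodLine p r))
  have halt : d ≤ infDist (g • r) (geodLine I (g • q)) := by
    rwa [← hgp, infDist_smul_geodLine]
  have hp : g⁻¹ • I = p := by rw [← hgp, inv_smul_smul]
  refine ⟨fun x => g⁻¹ • triangleMap I (g • q) (g • r) x, by simp [hp], by simp, by simp,
    fun x hx y hy => ?_⟩
  obtain ⟨hlow, hup⟩ := triangleMap_I_bilipschitz hd hgq ((hdist q).symm ▸ hdq)
    ((hdist q).trans_le hpq.2) ((hdist r).trans_le hpr.2) halt hx hy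
  have hL : goodTriangleConst b d ≤ max 1 (goodTriangleConst b d) := le_max_right _ _
  have he : 0 ≤ eucDist x y := Real.sqrt_nonneg _
  simp only [dist_smul]
  refine ⟨?_, hup.trans (mul_le_mul_of_nonneg_right hL he)⟩
  rw [one_div_mul_eq_div, div_le_iff₀ (by positivity)]
  exact hlow.trans (by rw [mul_comm]; gcongr)

/-- Two-dimensional case of Lemma 1: every `(a,b,d)`-good hyperbolic triangle — edge
lengths in `[a,b]` and every altitude at least `d` — is `L`-bilipschitz to the standard
Euclidean 2-simplex, for a constant `L = L(a,b,d)`. -/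
theorem good_triangle_bilipschitz_to_standard_simplex (a b d : ℝ) (ha : 0 < a)
    (hab : a ≤ b) (hd : 0 < d) :
    ∃ L : ℝ, 1 ≤ L ∧ ∀ p q r : ℍ,
      dist p q ∈ Set.Icc a b → dist q r ∈ Set.Icc a b → dist p r ∈ Set.Icc a b →
      d ≤ Metric.infDist p (geodLine q r) →
      d ≤ Metric.infDist q (geodLine p r) →
      d ≤ Metric.infDist r (geodLine p q) →
      ∃ f : ℝ × ℝ → ℍ,
        f (0, 0) = p ∧ f (1, 0) = q ∧ f (0, 1) = r ∧
        ∀ x ∈ stdSimplex2, ∀ y ∈ stdSimplex2,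
          (1 / L) * eucDist x y ≤ dist (f x) (f y) ∧
          dist (f x) (f y) ≤ L * eucDist x y :=
  good_triangle_bilipschitz_to_standard_simplex_general a b d hd
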